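/- arXiv:1806.00960 — 2 statements merged into one kernel-verified Lean document; each statement's English description precedes it below -/
import Mathlib

section
/- Every uncompromising mechanism is DIC for every capacity k ≤ n: for every agent i, every true profile x, every report profile of others, and every misreport x_i', the agent's equilibrium utility from truthful reporting is at least that from misreporting. -/
open scoped Classical
open unitInterval

noncomputable section

/-- Distance-based priority: agent `i` has strictly higher priority than `j` for the
facility at `s` if `i` is strictly closer, or equidistant with a smaller index
(deterministic tie-breaking). -/
def prio {n : ℕ} (x : Fin n → I) (s : I) (i j : Fin n) : Prop :=
  |(s : ℝ) - x i| < |(s : ℝ) - x j| ∨ (|(s : ℝ) - x i| = |(s : ℝ) - x j| ∧ i < j)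

/-- Agent `i` is among the `k` closest agents to `s` (the set `N_k^*(x,s)`). -/
def served {n : ℕ} (x : Fin n → I) (s : I) (k : ℕ) (i : Fin n) : Prop :=
  ({j : Fin n | prio x s j i}).ncard < k

/-- Ex-post equilibrium utility `u_i^*(s, x, k)`. -/
def util {n : ℕ} (x : Fin n → I) (s : I) (k : ℕ) (i : Fin n) : ℝ :=
  if served x s k i then 1 - |(s : ℝ) - x i| else 0

/-- Ex-post dominant-strategy incentive compatibility for capacity `k`. -/
def DIC (n k : ℕ) (M : (Fin n → I) → I) : Prop :=
  ∀ (i : Fin n) (x y : Fin n → I) (x' : I),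
    util x (M (Function.update y i x')) k i ≤ util x (M (Function.update y i (x i))) k i

/-- The uncompromising property of a mechanism. -/
def Uncompromising {n : ℕ} (M : (Fin n → I) → I) : Prop :=
  ∀ (x : Fin n → I) (i : Fin n),
    ((M x : ℝ) < x i → ∀ x' : I, (M x : ℝ) ≤ x' → M (Function.update x i x') = M x) ∧
    ((x i : ℝ) < M x → ∀ x' : I, (x' : ℝ) ≤ M x → M (Function.update x i x') = M x)

/-- Generalized median mechanisms: `M(x) = min_S max(max_{i ∈ S} x_i, a_S)`
(the max over the empty set being `0 = ⊥`). -/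
def IsGMM {n : ℕ} (M : (Fin n → I) → I) : Prop :=
  ∃ a : Finset (Fin n) → I,
    ∀ x, M x = Finset.univ.inf fun S : Finset (Fin n) => max (S.sup x) (a S)

/-- Social welfare of facility location `s`. -/
def welfare {n : ℕ} (x : Fin n → I) (k : ℕ) (s : I) : ℝ :=
  ∑ i, util x s k i

/-- Optimal social welfare `Π^*(x,k)`. -/
def optWelfare {n : ℕ} (x : Fin n → I) (k : ℕ) : ℝ :=
  ⨆ s : I, welfare x k s

/-- The median mechanism: outputs the `⌊(n+1)/2⌋`-th smallest reported location. -/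
def medianMech (n : ℕ) (x : Fin n → I) : I :=
  ((Finset.univ.val.map x).sort (· ≤ ·)).getD ((n + 1) / 2 - 1) 0

/-! An uncompromising mechanism lets agent `i` move the outcome only away from `x i`: if the
truthful outcome `t` lies above `x i`, then any misreport yields some `s ≥ t` (reporting `s`
itself would yield `s`, yet uncompromisingness forces `t`). So `t` lies between `x i` and `s`.
Moving the facility from `s` towards `x i` brings it closer to `i` by exactly as much as it
can bring it closer to anyone else, so every agent ahead of `i` at `t` is already ahead at `s`:
`i` is served at `t` whenever at `s`, and at smaller distance. -/

open Function

section Priority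

variable {n : ℕ} {x : Fin n → I} {s t : I} {i : Fin n}

/-- The hypothesis says that `t` lies between `x i` and `s`. -/
lemma prio_of_abs_sub_eq_add (h : |(s : ℝ) - x i| = |(t : ℝ) - x i| + |(s : ℝ) - t|)
    {j : Fin n} (hj : prio x t j i) : prio x s j i := by
  have tri : |(s : ℝ) - x j| ≤ |(s : ℝ) - t| + |(t : ℝ) - x j| := abs_sub_le _ _ _
  rcases hj with hlt | ⟨heq, hji⟩
  · exact Or.inl (by linarith)
  · rcases (show |(s : ℝ) - x j| ≤ |(s : ℝ) - x i| by linarith).lt_or_eq with hlt | heq'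
    · exact Or.inl hlt
    · exact Or.inr ⟨heq', hji⟩

lemma served_of_abs_sub_eq_add (h : |(s : ℝ) - x i| = |(t : ℝ) - x i| + |(s : ℝ) - t|)
    {k : ℕ} (hs : served x s k i) : served x t k i :=
  (Set.ncard_le_ncard (fun _ => prio_of_abs_sub_eq_add h) (Set.toFinite _)).trans_lt hs

lemma util_le_of_abs_sub_eq_add (h : |(s : ℝ) - x i| = |(t : ℝ) - x i| + |(s : ℝ) - t|)
    (k : ℕ) : util x s k i ≤ util x t k i := by
  have hdist : |(t : ℝ) - x i| ≤ |(s : ℝ) - x i| := by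
    have := abs_nonneg ((s : ℝ) - t); linarith
  unfold util
  by_cases hs : served x s k i
  · rw [if_pos hs, if_pos (served_of_abs_sub_eq_add h hs)]
    linarith
  · rw [if_neg hs]
    split_ifs
    · have := abs_sub_le_of_le_of_le (nonneg t) (le_one t) (nonneg (x i)) (le_one (x i))
      linarith
    · exact le_rfl

end Priority

namespace Uncompromising

variable {n : ℕ} {M : (Fin n → I) → I} (z : Fin n → I) (i : Fin n)

lemma apply_update_self_outcome (hM : Uncompromising M) : M (update z i (M z)) = M z := by
  rcases lt_trichotomy (M z : ℝ) (z i) with hlt | heq | hgt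
  · exact (hM z i).1 hlt _ le_rfl
  · conv_lhs => rw [Subtype.ext heq, update_eq_self]
  · exact (hM z i).2 hgt _ le_rfl

/-- If some report of `i` led to an outcome `w' < M z`, then reporting `w'` itself would lead
both to `w'` (by `apply_update_self_outcome`) and to `M z` (by uncompromisingness). -/
lemma le_apply_update_of_lt (hM : Uncompromising M) (h : (z i : ℝ) < M z) (w : I) :
    (M z : ℝ) ≤ M (update z i w) := by
  by_contra! hlt
  have hz := (hM z i).2 h _ hlt.le
  have hw := hM.apply_update_self_outcome (update z i w) i
  rw [update_idem] at hw
  exact hlt.ne (congrArg Subtype.val (hw.symm.trans hz))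

lemma apply_update_le_of_gt (hM : Uncompromising M) (h : (M z : ℝ) < z i) (w : I) :
    (M (update z i w) : ℝ) ≤ M z := by
  by_contra! hlt
  have hz := (hM z i).1 h _ hlt.le
  have hw := hM.apply_update_self_outcome (update z i w) i
  rw [update_idem] at hw
  exact hlt.ne' (congrArg Subtype.val (hw.symm.trans hz))

lemma abs_apply_update_sub_eq_add (hM : Uncompromising M) (w : I) :
    |(M (update z i w) : ℝ) - z i| = |(M z : ℝ) - z i| + |(M (update z i w) : ℝ) - M z| := by
  rcases lt_trichotomy (z i : ℝ) (M z) with hlt | heq | hgt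
  · have := hM.le_apply_update_of_lt z i hlt w
    rw [abs_of_nonneg (by linarith), abs_of_nonneg (by linarith), abs_of_nonneg (by linarith)]
    ring
  · rw [heq, sub_self, abs_zero, zero_add]
  · have := hM.apply_update_le_of_gt z i hgt w
    rw [abs_of_nonpos (by linarith), abs_of_nonpos (by linarith), abs_of_nonpos (by linarith)]
    ring

end Uncompromising

theorem uncompromising_implies_DIC (n : ℕ) (M : (Fin n → I) → I)
    (hM : Uncompromising M) :
    ∀ k ≤ n, DIC n k M := by
  intro k _ i x y x'
  have hbetween := hM.abs_apply_update_sub_eq_add (update y i (x i)) i x'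
  rw [update_idem, update_self] at hbetween
  exact util_le_of_abs_sub_eq_add hbetween k
end
end

section
/- For n ≥ 2 and 1 ≤ k ≤ ⌈(n-1)/2⌉, every uncompromising mechanism M has worst-case approximation ratio at least 2k/(k+1): for every ε > 0 there exists a profile x with Π*(x,k) / Π_M(x,k) > 2k/(k+1) − ε. -/
open scoped Classical
open unitInterval

noncomputable section

/-!
Fix a mechanism `M`. If in some profile `x` every agent but one is at distance at least `1/2`
from `M x`, then at most `k` agents are served, all but one of them with utility at most `1/2`,
so `Π_M ≤ (k + 1)/2`. If moreover `k` agents share a location `c`,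
then placing the facility at `c` serves exactly them with utility `1`, so `Π^* ≥ k`.

An uncompromising mechanism always admits such a profile. If `M` on the all-`1` profile outputs
`s ≤ 1/2`, moving one agent to `s` does not change the output; similarly at the all-`0` profile.
Otherwise walk from all-`0` to all-`1` moving agents one at a time from `0` to `1`: at the step
where the output crosses `1/2`, putting the moving agent at `1/2` forces the output to be `1/2`,
and one of the two groups at `0` and `1` has `k` agents because `2k ≤ n`.
-/

open Finset unitInterval

section Priority

variable {n : ℕ} {x : Fin n → I} {s : I} {k : ℕ}

lemma prio_irrefl (x : Fin n → I) (s : I) (i : Fin n) : ¬ prio x s i i := by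
  rintro (h | ⟨-, h⟩) <;> exact lt_irrefl _ h

lemma prio_trans {i j l : Fin n} : prio x s i j → prio x s j l → prio x s i l := by
  rintro (h₁ | ⟨h₁, h₁'⟩) (h₂ | ⟨h₂, h₂'⟩)
  · exact .inl (h₁.trans h₂)
  · exact .inl (h₂ ▸ h₁)
  · exact .inl (h₁ ▸ h₂)
  · exact .inr ⟨h₁.trans h₂, h₁'.trans h₂'⟩

lemma prio_or_prio_of_ne {i j : Fin n} (h : i ≠ j) : prio x s i j ∨ prio x s j i := by
  rcases lt_trichotomy |(s : ℝ) - x i| |(s : ℝ) - x j| with hd | hd | hd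
  · exact .inl (.inl hd)
  · rcases h.lt_or_gt with hij | hij
    · exact .inl (.inr ⟨hd, hij⟩)
    · exact .inr (.inr ⟨hd.symm, hij⟩)
  · exact .inr (.inl hd)

def prioRank (x : Fin n → I) (s : I) (i : Fin n) : ℕ :=
  #{j | prio x s j i}

lemma served_iff_prioRank_lt {i : Fin n} : served x s k i ↔ prioRank x s i < k := by
  rw [served, prioRank, ← Set.ncard_coe_finset, coe_filter]
  simp only [mem_univ, true_and]

lemma prioRank_lt_prioRank {i j : Fin n} (h : prio x s i j) : prioRank x s i < prioRank x s j := by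
  refine card_lt_card ((ssubset_iff_of_subset fun l hl => ?_).2 ⟨i, ?_, ?_⟩)
  · simp only [mem_filter, mem_univ, true_and] at hl ⊢
    exact prio_trans hl h
  · simpa using h
  · simpa using prio_irrefl x s i

lemma prioRank_injective (x : Fin n → I) (s : I) : Function.Injective (prioRank x s) := by
  intro i j hij
  by_contra h
  rcases prio_or_prio_of_ne h with hp | hp
  · exact (prioRank_lt_prioRank hp).ne hij
  · exact (prioRank_lt_prioRank hp).ne hij.symm

lemma prioRank_lt (x : Fin n → I) (s : I) (i : Fin n) : prioRank x s i < n := by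
  have hsub : ({j | prio x s j i} : Finset (Fin n)) ⊆ univ.erase i := fun j hj => by
    simp only [mem_filter, mem_univ, true_and] at hj
    exact mem_erase.2 ⟨fun hji => prio_irrefl x s i (hji ▸ hj), mem_univ j⟩
  have := card_le_card hsub
  rw [card_erase_of_mem (mem_univ i), card_univ, Fintype.card_fin] at this
  exact lt_of_le_of_lt this (Nat.sub_lt i.pos one_pos)

lemma card_served_le (x : Fin n → I) (s : I) (k : ℕ) : #{i | served x s k i} ≤ k := by
  simpa using card_le_card_of_injOn (t := range k) (prioRank x s)
    (fun i hi => by simpa [served_iff_prioRank_lt] using hi) (prioRank_injective x s).injOn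

lemma le_card_served (x : Fin n → I) (s : I) (hk : k ≤ n) : k ≤ #{i | served x s k i} := by
  have hunserved : #{i | ¬ served x s k i} ≤ n - k := by
    simpa using card_le_card_of_injOn (t := Ico k n) (prioRank x s)
      (fun i hi => by
        simp only [coe_filter, mem_univ, true_and, Set.mem_ofPred_eq,
          served_iff_prioRank_lt, not_lt] at hi
        exact mem_Ico.2 ⟨hi, prioRank_lt x s i⟩)
      (prioRank_injective x s).injOn
  have := card_filter_add_card_filter_not (s := univ) fun i => served x s k i
  rw [card_univ, Fintype.card_fin] at this
  omega

end Priority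

section Welfare

variable {n : ℕ}

lemma abs_sub_le_one (a b : I) : |(a : ℝ) - b| ≤ 1 :=
  abs_sub_le_iff.2 ⟨by linarith [a.2.2, b.2.1], by linarith [a.2.1, b.2.2]⟩

lemma util_nonneg (x : Fin n → I) (s : I) (k : ℕ) (i : Fin n) : 0 ≤ util x s k i := by
  unfold util
  split_ifs
  · linarith [abs_sub_le_one s (x i)]
  · exact le_rfl

lemma util_le_one (x : Fin n → I) (s : I) (k : ℕ) (i : Fin n) : util x s k i ≤ 1 := by
  unfold util
  split_ifs
  · linarith [abs_nonneg ((s : ℝ) - x i)]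
  · exact zero_le_one

lemma welfare_nonneg (x : Fin n → I) (k : ℕ) (s : I) : 0 ≤ welfare x k s :=
  sum_nonneg fun i _ => util_nonneg x s k i

lemma welfare_le_optWelfare (x : Fin n → I) (k : ℕ) (s : I) : welfare x k s ≤ optWelfare x k := by
  refine le_ciSup (f := welfare x k) ⟨n, ?_⟩ s
  rintro _ ⟨t, rfl⟩
  simpa [welfare] using sum_le_card_nsmul univ (util x t k) 1 fun i _ => util_le_one x t k i

lemma welfare_le_of_forall_ne_le_abs_sub {x : Fin n → I} {s : I} {k : ℕ} {d : ℝ} (a : Fin n)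
    (hd₀ : 0 ≤ d) (hd₁ : d ≤ 1) (hfar : ∀ i ≠ a, d ≤ |(s : ℝ) - x i|) :
    welfare x k s ≤ k * (1 - d) + d := by
  set S : Finset (Fin n) := {i | served x s k i}
  have hS : (#S : ℝ) ≤ k := by exact_mod_cast card_served_le x s k
  calc welfare x k s = ∑ i ∈ S, (1 - |(s : ℝ) - x i|) := by
        rw [welfare, sum_filter]; rfl
    _ ≤ ∑ i ∈ S, ((1 - d) + if i = a then d else 0) := by
        refine sum_le_sum fun i _ => ?_
        split_ifs with hi
        · linarith [abs_nonneg ((s : ℝ) - x i)]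
        · linarith [hfar i hi]
    _ = #S * (1 - d) + if a ∈ S then d else 0 := by
        rw [sum_add_distrib, sum_const, nsmul_eq_mul, sum_ite_eq']
    _ ≤ k * (1 - d) + d :=
        add_le_add (mul_le_mul_of_nonneg_right hS (by linarith)) (by split_ifs <;> linarith)

lemma eq_of_served_of_le_card {x : Fin n → I} {c : I} {k : ℕ} {i : Fin n}
    (hc : k ≤ #{j | x j = c}) (hi : served x c k i) : x i = c := by
  by_contra hne
  have hsub : ({j | x j = c} : Finset (Fin n)) ⊆ ({j | prio x c j i} : Finset (Fin n)) := by
    intro j hj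
    simp only [mem_filter, mem_univ, true_and] at hj ⊢
    refine .inl ?_
    rw [hj, sub_self, abs_zero, abs_pos, sub_ne_zero]
    exact fun h => hne (Subtype.ext h.symm)
  exact (served_iff_prioRank_lt.1 hi).not_ge (hc.trans (card_le_card hsub))

lemma le_welfare_of_le_card {x : Fin n → I} {c : I} {k : ℕ} (hc : k ≤ #{j | x j = c}) :
    (k : ℝ) ≤ welfare x k c := by
  have hkn : k ≤ n := hc.trans ((card_filter_le _ _).trans (by simp))
  have hutil : ∀ i, util x c k i = if served x c k i then 1 else 0 := fun i => by
    unfold util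
    split_ifs with hi
    · simp [eq_of_served_of_le_card hc hi]
    · rfl
  rw [welfare, sum_congr rfl fun i _ => hutil i, sum_boole]
  exact_mod_cast le_card_served x c hkn

end Welfare

section Uncompromising

variable {n : ℕ} {M : (Fin n → I) → I}

def stair (n j : ℕ) : Fin n → I := fun i => if (i : ℕ) < j then 1 else 0

lemma Uncompromising.apply_update_self (hM : Uncompromising M) (x : Fin n → I) (i : Fin n) :
    M (Function.update x i (M x)) = M x := by
  rcases lt_trichotomy (M x : ℝ) (x i) with h | h | h
  · exact (hM x i).1 h _ le_rfl
  · rw [show M x = x i from Subtype.ext h, Function.update_eq_self]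
    exact Subtype.ext h
  · exact (hM x i).2 h _ le_rfl

/-- Otherwise moving `a` to the endpoint on the far side of `M x` would not change `M x`. -/
lemma Uncompromising.apply_eq_of_le_of_le (hM : Uncompromising M) {x : Fin n → I} {a : Fin n}
    (h₀ : (M (Function.update x a 0) : ℝ) ≤ x a) (h₁ : (x a : ℝ) ≤ M (Function.update x a 1)) :
    M x = x a := by
  refine Subtype.ext (le_antisymm (not_lt.1 fun h => ?_) (not_lt.1 fun h => ?_))
  · rw [(hM x a).2 h 0 (M x).2.1] at h₀
    exact h.not_ge h₀
  · rw [(hM x a).1 h 1 (M x).2.2] at h₁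
    exact h.not_ge h₁

lemma Uncompromising.exists_far_of_const (hM : Uncompromising M) (b : I) (a : Fin n)
    (hb : 1 / 2 ≤ |(M (fun _ => b) : ℝ) - b|) :
    ∃ x : Fin n → I, (∀ i ≠ a, 1 / 2 ≤ |(M x : ℝ) - x i|) ∧ n - 1 ≤ #{i | x i = b} := by
  refine ⟨Function.update (fun _ => b) a (M fun _ => b), fun i hi => ?_, ?_⟩
  · rwa [hM.apply_update_self, Function.update_of_ne hi]
  · calc n - 1 = #(univ.erase a) := by simp
      _ ≤ #{i | Function.update (fun _ => b) a (M fun _ => b) i = b} :=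
        card_le_card fun i hi => by simp [Function.update_of_ne (ne_of_mem_erase hi)]

lemma Uncompromising.exists_far_of_stair (hM : Uncompromising M) {j : ℕ} (hj : j < n)
    (h₀ : (M (stair n j) : ℝ) ≤ 1 / 2) (h₁ : 1 / 2 ≤ (M (stair n (j + 1)) : ℝ)) :
    ∃ x : Fin n → I, (∀ i ≠ ⟨j, hj⟩, 1 / 2 ≤ |(M x : ℝ) - x i|) ∧
      j ≤ #{i | x i = 1} ∧ n - 1 - j ≤ #{i | x i = 0} := by
  set a : Fin n := ⟨j, hj⟩
  set x := Function.update (stair n j) a ⟨1 / 2, by norm_num, by norm_num⟩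
  have hx₀ : Function.update x a 0 = stair n j := by
    ext1 i
    rcases eq_or_ne i a with rfl | hi
    · simp [x, stair, a]
    · simp [x, Function.update_of_ne hi]
  have hx₁ : Function.update x a 1 = stair n (j + 1) := by
    ext1 i
    rcases eq_or_ne i a with rfl | hi
    · simp [x, stair, a]
    · have : (i : ℕ) ≠ j := fun h => hi (Fin.ext h)
      simp only [x, Function.update_of_ne hi, stair]
      congr 1
      exact propext (by omega)
  have hxa : (x a : ℝ) = 1 / 2 := by simp [x]
  have hMx : (M x : ℝ) = 1 / 2 := by
    rw [hM.apply_eq_of_le_of_le (a := a) (by rwa [hx₀, hxa]) (by rwa [hx₁, hxa]), hxa]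
  refine ⟨x, fun i hi => ?_, ?_, ?_⟩
  · simp only [hMx, x, Function.update_of_ne hi, stair]
    split_ifs <;> norm_num
  · calc j = #(Iio a) := (Fin.card_Iio a).symm
      _ ≤ #{i | x i = 1} := card_le_card fun i hi => by
        have hia : i < a := mem_Iio.1 hi
        have : (i : ℕ) < j := hia
        simp [x, Function.update_of_ne hia.ne, stair, this]
  · calc n - 1 - j = #(Ioi a) := (Fin.card_Ioi a).symm
      _ ≤ #{i | x i = 0} := card_le_card fun i hi => by
        have hia : a < i := mem_Ioi.1 hi
        have : ¬ (i : ℕ) < j := not_lt.2 (le_of_lt hia)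
        simp [x, Function.update_of_ne hia.ne', stair, this]

theorem Uncompromising.exists_far_profile (hM : Uncompromising M) {k : ℕ} (hn : 0 < n)
    (hk : 2 * k ≤ n) :
    ∃ x : Fin n → I, (∃ a, ∀ i ≠ a, 1 / 2 ≤ |(M x : ℝ) - x i|) ∧ ∃ c, k ≤ #{i | x i = c} := by
  have hstair₀ : stair n 0 = fun _ => 0 := rfl
  have hstair : ∀ j ≥ n, stair n j = fun _ => 1 := fun j hj => by
    ext1 i
    simp [stair, i.isLt.trans_le hj]
  by_cases h₀ : 1 / 2 ≤ (M (stair n 0) : ℝ)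
  · obtain ⟨x, hfar, hc⟩ := hM.exists_far_of_const 0 ⟨0, hn⟩ (by
      rwa [← hstair₀, Set.Icc.coe_zero, sub_zero, abs_of_nonneg (M _).2.1])
    exact ⟨x, ⟨_, hfar⟩, 0, by omega⟩
  by_cases h₁ : (M (stair n n) : ℝ) < 1 / 2
  · obtain ⟨x, hfar, hc⟩ := hM.exists_far_of_const 1 ⟨0, hn⟩ (by
      rw [← hstair n le_rfl, abs_sub_comm]
      simp only [Set.Icc.coe_one]
      rw [abs_of_nonneg (by linarith [(M (stair n n)).2.2])]
      linarith)
    exact ⟨x, ⟨_, hfar⟩, 1, by omega⟩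
  obtain ⟨j, hj, hj₁⟩ := Nat.exists_not_and_succ_of_not_zero_of_exists
    (p := fun j => 1 / 2 ≤ (M (stair n j) : ℝ)) h₀ ⟨n, not_lt.1 h₁⟩
  have hjn : j < n :=
    not_le.1 fun h => hj (by rw [hstair j h, ← hstair n le_rfl]; exact not_lt.1 h₁)
  obtain ⟨x, hfar, hc₁, hc₀⟩ := hM.exists_far_of_stair hjn (not_le.1 hj).le hj₁
  refine ⟨x, ⟨_, hfar⟩, ?_⟩
  rcases le_or_gt k j with hkj | hkj
  · exact ⟨1, hkj.trans hc₁⟩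
  · exact ⟨0, le_trans (by omega) hc₀⟩

end Uncompromising

theorem DIC_lower_bound_small_k_general (n k : ℕ) (hk1 : 1 ≤ k)
    (hk2 : 2 * k ≤ n)  -- i.e. `k ≤ ⌈(n-1)/2⌉`
    (M : (Fin n → I) → I) (hM : Uncompromising M) :
    ∀ ε : ℝ, 0 < ε →
      ∃ x : Fin n → I,
        (2 * (k : ℝ) / ((k : ℝ) + 1) - ε) * welfare x k (M x) < optWelfare x k := by
  intro ε hε
  obtain ⟨x, ⟨a, hfar⟩, c, hc⟩ := hM.exists_far_profile (k := k) (by omega) hk2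
  have hk : (1 : ℝ) ≤ k := by exact_mod_cast hk1
  have hW₀ := welfare_nonneg x k (M x)
  have hW : welfare x k (M x) ≤ k * (1 - 1 / 2) + 1 / 2 :=
    welfare_le_of_forall_ne_le_abs_sub a (by norm_num) (by norm_num) hfar
  have hopt : (k : ℝ) ≤ optWelfare x k :=
    (le_welfare_of_le_card hc).trans (welfare_le_optWelfare x k c)
  refine ⟨x, lt_of_lt_of_le ?_ hopt⟩
  have hQ : 2 * (k : ℝ) / (k + 1) * ((k + 1) / 2) = k := by field_simp
  rcases le_or_gt (2 * (k : ℝ) / (k + 1)) ε with hεQ | hεQ <;> nlinarith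

theorem DIC_lower_bound_small_k (n k : ℕ) (hn : 2 ≤ n) (hk1 : 1 ≤ k)
    (hk2 : 2 * k ≤ n)  -- i.e. `k ≤ ⌈(n-1)/2⌉`
    (M : (Fin n → I) → I) (hM : Uncompromising M) :
    ∀ ε : ℝ, 0 < ε →
      ∃ x : Fin n → I,
        (2 * (k : ℝ) / ((k : ℝ) + 1) - ε) * welfare x k (M x) < optWelfare x k :=
  DIC_lower_bound_small_k_general n k hk1 hk2 M hM
end
end
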